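/- Let 0 < α < 1, T > 0, N a positive integer, and r ≥ 1, and let p^{(n)}_{n−i} be the coefficients built from the L1 weights on the graded mesh t_n = T(n/N)^r. Then there exists a constant C > 0, depending only on α, r and T but not on N, such that for every n = 1, 2, ..., N one has Σ_{s=1}^{n} p^{(n)}_{n−s} s^{−min{2−α, rα}} ≤ C N^{−min{2−α, rα}}. -/

import Mathlib

/-!
The recursion for `p^{(n)}` says that `(p^{(n)}_{n-s})_{1 ≤ s ≤ n}` is the last row of the
inverse of the lower triangular matrix `(b^{(s)}_{s-k})_{1 ≤ k ≤ s ≤ n}`, and concavity of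
`x ↦ x ^ (1 - α)` makes these coefficients nonnegative. Hence any barrier `w` with `w 0 = 0` and
`s ^ (-γ) ≤ ∑_k b^{(s)}_{s-k} (w_k - w_{k-1})` for all `s` bounds the weighted sum by `w_n`.
As `b^{(s)}_{s-k} ≥ (1 - α) t_s ^ (-α) / Γ(2 - α)`, the barrier
`w_k = Γ(2 - α) / (1 - α) · t_k ^ α · k ^ (-γ)` works, and since `γ = min (2 - α) (r α) ≤ r α`
and `t_k ^ α = T ^ α (k / N) ^ (r α)`, it satisfies `w_n ≤ Γ(2 - α) / (1 - α) · T ^ α · N ^ (-γ)`.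
-/

noncomputable section

/-- The graded mesh `t_n = T (n/N)^r` on `[0,T]`. -/
def gmesh (T r : ℝ) (N n : ℕ) : ℝ := T * ((n : ℝ) / (N : ℝ)) ^ r

/-- The step sizes `τ_n = t_n - t_{n-1}` of the graded mesh. -/
def gstep (T r : ℝ) (N n : ℕ) : ℝ := gmesh T r N n - gmesh T r N (n - 1)

/-- The L1 weights
`d_{n,k} = ((t_n − t_{n−k})^{1−α} − (t_n − t_{n−k+1})^{1−α})/τ_{n−k+1}`. -/
def L1w (α T r : ℝ) (N n k : ℕ) : ℝ :=
  ((gmesh T r N n - gmesh T r N (n - k)) ^ (1 - α)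
      - (gmesh T r N n - gmesh T r N (n - k + 1)) ^ (1 - α)) / gstep T r N (n - k + 1)

/-- The coefficients `b^{(n)}_{n−i} = d_{n,n−i+1}/Γ(2−α)`; here `bcoef α T r N n i`
denotes `b^{(n)}_{n-i}`. -/
def bcoef (α T r : ℝ) (N n i : ℕ) : ℝ := L1w α T r N n (n - i + 1) / Real.Gamma (2 - α)

/-- Auxiliary definition: `pcoefAux α T r N n m` is the coefficient `p^{(n)}_m`,
defined by `p^{(n)}_0 = Γ(2−α) τ_n^α` and, for `m = n - i` with `1 ≤ i ≤ n−1`,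
`p^{(n)}_{n−i} = Γ(2−α) τ_i^α Σ_{k=i+1}^{n} (b^{(k)}_{k−i−1} − b^{(k)}_{k−i}) p^{(n)}_{n−k}`
(the sum over `k ∈ [i+1, n]` is re-indexed by `j = n - k ∈ [0, n-i-1]`). -/
def pcoefAux (α T r : ℝ) (N n : ℕ) : ℕ → ℝ
  | 0 => Real.Gamma (2 - α) * (gstep T r N n) ^ α
  | (m + 1) =>
      Real.Gamma (2 - α) * (gstep T r N (n - (m + 1))) ^ α *
        ∑ j ∈ (Finset.range (m + 1)).attach,
          (bcoef α T r N (n - j.1) (n - m) - bcoef α T r N (n - j.1) (n - (m + 1))) *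
            pcoefAux α T r N n j.1
  decreasing_by
    have := j.2
    simp only [Finset.mem_range] at this
    omega

/-- `pcoef α T r N n i` is the coefficient `p^{(n)}_{n−i}` for `1 ≤ i ≤ n`. -/
def pcoef (α T r : ℝ) (N n i : ℕ) : ℝ := pcoefAux α T r N n (n - i)

open Finset

theorem Finset.sum_Icc_one_sub_pred {M : Type*} [AddCommGroup M] (w : ℕ → M) (n : ℕ) :
    ∑ k ∈ Icc 1 n, (w k - w (k - 1)) = w n - w 0 := by
  induction n with
  | zero => simp
  | succ n ih =>
    rw [sum_Icc_succ_top (by omega), ih, Nat.add_sub_cancel]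
    abel

theorem Finset.mul_sub_le_sum_mul_sub {s : ℕ} {L : ℝ} (b w : ℕ → ℝ) (hw : Monotone w)
    (hb : ∀ k ∈ Icc 1 s, L ≤ b k) :
    L * (w s - w 0) ≤ ∑ k ∈ Icc 1 s, b k * (w k - w (k - 1)) := by
  rw [← sum_Icc_one_sub_pred, mul_sum]
  exact sum_le_sum fun k hk ↦ mul_le_mul_of_nonneg_right (hb k hk) (sub_nonneg.2 (hw k.pred_le))

theorem Finset.sum_mul_le_sub_of_sum_mul_eq_one {n : ℕ} {p f w : ℕ → ℝ} {b : ℕ → ℕ → ℝ}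
    (hp : ∀ s ∈ Icc 1 n, 0 ≤ p s) (hpb : ∀ k ∈ Icc 1 n, ∑ s ∈ Icc k n, p s * b s k = 1)
    (hf : ∀ s ∈ Icc 1 n, f s ≤ ∑ k ∈ Icc 1 s, b s k * (w k - w (k - 1))) :
    ∑ s ∈ Icc 1 n, p s * f s ≤ w n - w 0 :=
  calc ∑ s ∈ Icc 1 n, p s * f s
      ≤ ∑ s ∈ Icc 1 n, ∑ k ∈ Icc 1 s, p s * (b s k * (w k - w (k - 1))) :=
        sum_le_sum fun s hs ↦ (mul_le_mul_of_nonneg_left (hf s hs) (hp s hs)).trans_eq (mul_sum ..)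
    _ = ∑ k ∈ Icc 1 n, (∑ s ∈ Icc k n, p s * b s k) * (w k - w (k - 1)) := by
        rw [sum_comm' (t' := Icc 1 n) (s' := fun k ↦ Icc k n)
          (by intro s k; simp only [mem_Icc]; omega)]
        simp only [sum_mul, mul_assoc]
    _ = w n - w 0 := by
        rw [← sum_Icc_one_sub_pred]
        exact sum_congr rfl fun k hk ↦ by rw [hpb k hk, one_mul]

theorem Real.mul_rpow_sub_one_mul_sub_le_rpow_sub_rpow {b c p : ℝ} (hb : 0 ≤ b) (hc : 0 < c)
    (hp0 : 0 ≤ p) (hp1 : p ≤ 1) : p * c ^ (p - 1) * (c - b) ≤ c ^ p - b ^ p := by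
  have bernoulli := rpow_one_add_le_one_add_mul_self (s := b / c - 1)
    (by linarith [div_nonneg hb hc.le]) hp0 hp1
  rw [add_sub_cancel] at bernoulli
  have hbp : b ^ p = (b / c) ^ p * c ^ p := by
    rw [← mul_rpow (div_nonneg hb hc.le) hc.le, div_mul_cancel₀ _ hc.ne']
  have hcp : c ^ (p - 1) = c ^ p / c := rpow_sub_one hc.ne' p
  have hcp0 : 0 < c ^ p := rpow_pos_of_pos hc p
  rw [hbp, hcp]
  have hmul := mul_le_mul_of_nonneg_right bernoulli hcp0.le
  have htangent : p * (c ^ p / c) * (c - b) = c ^ p - (1 + p * (b / c - 1)) * c ^ p := by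
    field_simp
    ring
  linarith

section GradedMesh

variable {α T r : ℝ} {N : ℕ}

theorem gmesh_zero (hr : r ≠ 0) : gmesh T r N 0 = 0 := by
  simp [gmesh, Real.zero_rpow hr]

theorem gmesh_nonneg (hT : 0 ≤ T) (k : ℕ) : 0 ≤ gmesh T r N k := by
  unfold gmesh
  positivity

theorem gmesh_strictMono (hT : 0 < T) (hr : 0 < r) (hN : 0 < N) : StrictMono (gmesh T r N) :=
  fun a b hab ↦ mul_lt_mul_of_pos_left (Real.rpow_lt_rpow (by positivity)
    (div_lt_div_of_pos_right (by exact_mod_cast hab) (by exact_mod_cast hN)) hr) hT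

theorem gstep_pos (hT : 0 < T) (hr : 0 < r) (hN : 0 < N) {k : ℕ} (hk : 1 ≤ k) :
    0 < gstep T r N k :=
  sub_pos.2 (gmesh_strictMono hT hr hN (by omega))

theorem gmesh_rpow_mul_rpow_neg (hT : 0 ≤ T) (hN : 0 < N) {k : ℕ} (hk : 0 < k) (γ : ℝ) :
    gmesh T r N k ^ α * (k : ℝ) ^ (-γ) =
      T ^ α * (N : ℝ) ^ (-γ) * ((k : ℝ) / N) ^ (r * α - γ) := by
  have hN' : (0 : ℝ) < N := by exact_mod_cast hN
  have hkN : (0 : ℝ) < k / N := by positivity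
  have hk_eq : (k : ℝ) = k / N * N := (div_mul_cancel₀ _ hN'.ne').symm
  rw [gmesh, Real.mul_rpow hT (by positivity), ← Real.rpow_mul hkN.le, hk_eq,
    Real.mul_rpow hkN.le hN'.le, ← hk_eq, Real.rpow_sub hkN, Real.rpow_neg hkN.le]
  ring

theorem monotone_gmesh_rpow_mul_rpow_neg (hT : 0 ≤ T) (hr : r ≠ 0) (hN : 0 < N) (hα : α ≠ 0)
    {γ : ℝ} (hγ : γ ≤ r * α) : Monotone fun k : ℕ ↦ gmesh T r N k ^ α * (k : ℝ) ^ (-γ) := by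
  intro a b hab
  dsimp only
  rcases Nat.eq_zero_or_pos a with rfl | ha
  · simp only [gmesh_zero hr, Real.zero_rpow hα, zero_mul]
    have := gmesh_nonneg hT (r := r) (N := N) b
    positivity
  rw [gmesh_rpow_mul_rpow_neg hT hN ha, gmesh_rpow_mul_rpow_neg hT hN (ha.trans_le hab)]
  gcongr

theorem gmesh_rpow_mul_rpow_neg_le (hT : 0 ≤ T) {n : ℕ} (hn : 0 < n) (hnN : n ≤ N)
    {γ : ℝ} (hγ : γ ≤ r * α) :
    gmesh T r N n ^ α * (n : ℝ) ^ (-γ) ≤ T ^ α * (N : ℝ) ^ (-γ) := by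
  rw [gmesh_rpow_mul_rpow_neg hT (hn.trans_le hnN) hn]
  refine mul_le_of_le_one_right (by positivity) (Real.rpow_le_one (by positivity) ?_ (by linarith))
  exact div_le_one_of_le₀ (by exact_mod_cast hnN) (by positivity)

end GradedMesh

section L1Coefficients

variable {α T r : ℝ} {N : ℕ}

theorem bcoef_eq {n i : ℕ} (hi : 1 ≤ i) (hin : i ≤ n) :
    bcoef α T r N n i =
      ((gmesh T r N n - gmesh T r N (i - 1)) ^ (1 - α)
        - (gmesh T r N n - gmesh T r N i) ^ (1 - α)) / gstep T r N i / Real.Gamma (2 - α) := by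
  rw [bcoef, L1w, show n - (n - i + 1) = i - 1 by omega, show i - 1 + 1 = i by omega]

theorem Gamma_mul_gstep_rpow_mul_bcoef_self (hT : 0 < T) (hr : 0 < r) (hN : 0 < N)
    (hα : α < 1) {k : ℕ} (hk : 1 ≤ k) :
    Real.Gamma (2 - α) * gstep T r N k ^ α * bcoef α T r N k k = 1 := by
  have hτ := gstep_pos hT hr hN hk
  have hΓ : Real.Gamma (2 - α) ≠ 0 := (Real.Gamma_pos_of_pos (by linarith)).ne'
  rw [bcoef_eq hk le_rfl, sub_self, Real.zero_rpow (by linarith), sub_zero, ← gstep,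
    mul_div_assoc', mul_div_assoc', mul_assoc, ← Real.rpow_add hτ, add_sub_cancel,
    Real.rpow_one, mul_div_assoc, div_self hτ.ne', mul_one, div_self hΓ]

/-- `b^{(s)}_{s-k}` is a difference quotient of the concave `x ↦ x ^ (1 - α)` on a subinterval
of `[0, t_s]`, hence at least its derivative at `t_s`. -/
theorem bcoef_lower (hT : 0 < T) (hr : 0 < r) (hN : 0 < N) (hα0 : 0 ≤ α) (hα1 : α ≤ 1)
    {s k : ℕ} (hk : 1 ≤ k) (hks : k ≤ s) :
    (1 - α) * gmesh T r N s ^ (-α) / Real.Gamma (2 - α) ≤ bcoef α T r N s k := by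
  have hmono := gmesh_strictMono hT hr hN
  have hτ := gstep_pos hT hr hN hk
  set c := gmesh T r N s - gmesh T r N (k - 1)
  set b := gmesh T r N s - gmesh T r N k
  have hb : 0 ≤ b := sub_nonneg.2 (hmono.monotone hks)
  have hcb : c - b = gstep T r N k := by simp only [c, b, gstep]; ring
  have hc : 0 < c := by linarith
  have hcs : c ≤ gmesh T r N s := sub_le_self _ (gmesh_nonneg hT.le _)
  have tangent := Real.mul_rpow_sub_one_mul_sub_le_rpow_sub_rpow (p := 1 - α) hb hc
    (by linarith) (by linarith)
  rw [sub_sub_cancel_left, hcb] at tangent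
  have hcα : gmesh T r N s ^ (-α) ≤ c ^ (-α) := Real.rpow_le_rpow_of_nonpos hc hcs (by linarith)
  rw [bcoef_eq hk hks, div_le_div_iff_of_pos_right (Real.Gamma_pos_of_pos (by linarith)),
    le_div_iff₀ hτ]
  calc (1 - α) * gmesh T r N s ^ (-α) * gstep T r N k
      ≤ (1 - α) * c ^ (-α) * gstep T r N k := by gcongr
    _ ≤ c ^ (1 - α) - b ^ (1 - α) := tangent

/-- Difference quotients of the concave `x ↦ x ^ (1 - α)` over adjacent cells decrease. -/
theorem bcoef_le_bcoef_succ (hT : 0 < T) (hr : 0 < r) (hN : 0 < N) (hα0 : 0 ≤ α)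
    (hα1 : α ≤ 1) {s i : ℕ} (hi : 1 ≤ i) (his : i + 1 ≤ s) :
    bcoef α T r N s i ≤ bcoef α T r N s (i + 1) := by
  have hmono := gmesh_strictMono hT hr hN
  set x := gmesh T r N s - gmesh T r N (i + 1)
  set y := gmesh T r N s - gmesh T r N i
  set z := gmesh T r N s - gmesh T r N (i - 1)
  have hx : 0 ≤ x := sub_nonneg.2 (hmono.monotone his)
  have hxy : x < y := sub_lt_sub_left (hmono (by omega)) _
  have hyz : y < z := sub_lt_sub_left (hmono (by omega)) _
  have slope := (Real.concaveOn_rpow (p := 1 - α) (by linarith) (by linarith)).slope_anti_adjacent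
    (Set.mem_Ici.2 hx) (Set.mem_Ici.2 (by linarith)) hxy hyz
  rw [show z - y = gstep T r N i by simp only [z, y, gstep]; ring,
    show y - x = gstep T r N (i + 1) by simp only [y, x, gstep, Nat.add_sub_cancel]; ring] at slope
  rw [bcoef_eq hi (by omega), bcoef_eq (by omega) his, Nat.add_sub_cancel,
    div_le_div_iff_of_pos_right (Real.Gamma_pos_of_pos (by linarith))]
  exact slope

end L1Coefficients

section InverseCoefficients

variable {α T r : ℝ} {N n : ℕ}

theorem pcoef_self : pcoef α T r N n n = Real.Gamma (2 - α) * gstep T r N n ^ α := by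
  rw [pcoef, Nat.sub_self, pcoefAux]

theorem pcoef_eq_mul_sum {i : ℕ} (hin : i < n) :
    pcoef α T r N n i = Real.Gamma (2 - α) * gstep T r N i ^ α *
      ∑ k ∈ Icc (i + 1) n, (bcoef α T r N k (i + 1) - bcoef α T r N k i) * pcoef α T r N n k := by
  obtain ⟨m, hm⟩ : ∃ m, n - i = m + 1 := ⟨n - i - 1, by omega⟩
  rw [pcoef, hm, pcoefAux, sum_attach (range (m + 1)) fun j ↦
    (bcoef α T r N (n - j) (n - m) - bcoef α T r N (n - j) (n - (m + 1))) * pcoefAux α T r N n j,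
    show n - (m + 1) = i by omega, show n - m = i + 1 by omega]
  congr 1
  refine sum_nbij' (fun j ↦ n - j) (fun k ↦ n - k) ?_ ?_ ?_ ?_ ?_ <;>
    intro j hj <;> simp only [mem_range, mem_Icc] at hj ⊢
  · omega
  · omega
  · omega
  · omega
  · rw [pcoef, Nat.sub_sub_self (by omega)]

/-- The recursion defining `p^{(n)}_{n-k}` says exactly that the sums for `k` and `k + 1`
agree. -/
theorem sum_pcoef_mul_bcoef (hT : 0 < T) (hr : 0 < r) (hN : 0 < N) (hα : α < 1) {k : ℕ}
    (hk : 1 ≤ k) (hkn : k ≤ n) :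
    ∑ s ∈ Icc k n, pcoef α T r N n s * bcoef α T r N s k = 1 := by
  induction hkn using Nat.decreasingInduction with
  | self =>
    rw [Icc_self, sum_singleton, pcoef_self,
      Gamma_mul_gstep_rpow_mul_bcoef_self hT hr hN hα hk]
  | of_succ k hkn ih =>
    rw [← add_sum_Ioc_eq_sum_Icc hkn.le, ← Icc_add_one_left_eq_Ioc, pcoef_eq_mul_sum hkn,
      mul_right_comm, Gamma_mul_gstep_rpow_mul_bcoef_self hT hr hN hα hk, one_mul,
      ← sum_add_distrib, ← ih (by omega)]
    exact sum_congr rfl fun s _ ↦ by ring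

theorem pcoef_nonneg (hT : 0 < T) (hr : 0 < r) (hN : 0 < N) (hα0 : 0 ≤ α) (hα1 : α ≤ 1)
    {s : ℕ} (hs : s ∈ Icc 1 n) : 0 ≤ pcoef α T r N n s := by
  have hΓ : 0 < Real.Gamma (2 - α) := Real.Gamma_pos_of_pos (by linarith)
  induction hd : n - s using Nat.strong_induction_on generalizing s with
  | _ d ih =>
    obtain ⟨hs1, hsn⟩ := mem_Icc.1 hs
    have hτ : 0 ≤ gstep T r N s ^ α := Real.rpow_nonneg (gstep_pos hT hr hN hs1).le α
    rcases hsn.eq_or_lt with rfl | hsn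
    · rw [pcoef_self]
      exact mul_nonneg hΓ.le hτ
    rw [pcoef_eq_mul_sum hsn]
    refine mul_nonneg (mul_nonneg hΓ.le hτ) (sum_nonneg fun k hk ↦ ?_)
    rw [mem_Icc] at hk
    exact mul_nonneg (sub_nonneg.2 (bcoef_le_bcoef_succ hT hr hN hα0 hα1 hs1 hk.1))
      (ih (n - k) (by omega) (mem_Icc.2 ⟨by omega, hk.2⟩) rfl)

end InverseCoefficients

section Barrier

variable {α T r γ : ℝ} {N : ℕ}

def l1Barrier (α T r γ : ℝ) (N k : ℕ) : ℝ :=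
  Real.Gamma (2 - α) / (1 - α) * (gmesh T r N k ^ α * (k : ℝ) ^ (-γ))

theorem l1Barrier_zero (hr : r ≠ 0) (hα : α ≠ 0) : l1Barrier α T r γ N 0 = 0 := by
  simp [l1Barrier, gmesh_zero hr, Real.zero_rpow hα]

theorem monotone_l1Barrier (hT : 0 ≤ T) (hr : r ≠ 0) (hN : 0 < N) (hα0 : α ≠ 0) (hα1 : α < 1)
    (hγ : γ ≤ r * α) : Monotone (l1Barrier α T r γ N) :=
  (monotone_gmesh_rpow_mul_rpow_neg hT hr hN hα0 hγ).const_mul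
    (div_pos (Real.Gamma_pos_of_pos (by linarith)) (by linarith)).le

theorem rpow_neg_le_sum_bcoef_mul_sub_l1Barrier (hT : 0 < T) (hr : 0 < r) (hN : 0 < N)
    (hα0 : 0 < α) (hα1 : α < 1) (hγ : γ ≤ r * α) {s : ℕ} (hs : 1 ≤ s) :
    (s : ℝ) ^ (-γ) ≤ ∑ k ∈ Icc 1 s,
      bcoef α T r N s k * (l1Barrier α T r γ N k - l1Barrier α T r γ N (k - 1)) := by
  have hts : 0 < gmesh T r N s := by
    rw [← gmesh_zero (T := T) (N := N) hr.ne']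
    exact gmesh_strictMono hT hr hN hs
  refine le_of_eq_of_le ?_ (mul_sub_le_sum_mul_sub _ _
    (monotone_l1Barrier hT.le hr.ne' hN hα0.ne' hα1 hγ) fun k hk ↦
      bcoef_lower hT hr hN hα0.le hα1.le (mem_Icc.1 hk).1 (mem_Icc.1 hk).2)
  have hΓ : Real.Gamma (2 - α) ≠ 0 := (Real.Gamma_pos_of_pos (by linarith)).ne'
  have h1α : 1 - α ≠ 0 := (sub_pos.2 hα1).ne'
  rw [l1Barrier_zero hr.ne' hα0.ne', sub_zero, l1Barrier, Real.rpow_neg hts.le]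
  field_simp

theorem l1Barrier_le (hT : 0 ≤ T) (hα : α < 1) (hγ : γ ≤ r * α) {n : ℕ} (hn : 0 < n)
    (hnN : n ≤ N) :
    l1Barrier α T r γ N n ≤ Real.Gamma (2 - α) / (1 - α) * T ^ α * (N : ℝ) ^ (-γ) := by
  rw [l1Barrier, mul_assoc]
  exact mul_le_mul_of_nonneg_left (gmesh_rpow_mul_rpow_neg_le hT hn hnN hγ)
    (div_pos (Real.Gamma_pos_of_pos (by linarith)) (by linarith)).le

end Barrier

/-- `Σ_{s=1}^{n} p^{(n)}_{n−s} s^{−min{2−α, rα}} ≤ C N^{−min{2−α, rα}}`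
with `C` independent of `N`. -/
theorem pcoef_weighted_sum_bound
    (α T r : ℝ) (hα0 : 0 < α) (hα1 : α < 1) (hT : 0 < T) (hr : 1 ≤ r) :
    ∃ C > 0, ∀ N : ℕ, 0 < N → ∀ n : ℕ, 1 ≤ n → n ≤ N →
      ∑ s ∈ Finset.Icc 1 n, pcoef α T r N n s * (s : ℝ) ^ (-(min (2 - α) (r * α)))
        ≤ C * (N : ℝ) ^ (-(min (2 - α) (r * α))) := by
  set γ := min (2 - α) (r * α)
  have hγ : γ ≤ r * α := min_le_right _ _
  have hr0 : 0 < r := by linarith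
  have hΓ : 0 < Real.Gamma (2 - α) := Real.Gamma_pos_of_pos (by linarith)
  have h1α : 0 < 1 - α := by linarith
  refine ⟨Real.Gamma (2 - α) / (1 - α) * T ^ α, by positivity, fun N hN n hn hnN ↦ ?_⟩
  calc ∑ s ∈ Icc 1 n, pcoef α T r N n s * (s : ℝ) ^ (-γ)
      ≤ l1Barrier α T r γ N n - l1Barrier α T r γ N 0 :=
        sum_mul_le_sub_of_sum_mul_eq_one
          (fun s hs ↦ pcoef_nonneg hT hr0 hN hα0.le hα1.le hs)
          (fun k hk ↦ sum_pcoef_mul_bcoef hT hr0 hN hα1 (mem_Icc.1 hk).1 (mem_Icc.1 hk).2)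
          (fun s hs ↦ rpow_neg_le_sum_bcoef_mul_sub_l1Barrier hT hr0 hN hα0 hα1 hγ
            (mem_Icc.1 hs).1)
    _ ≤ Real.Gamma (2 - α) / (1 - α) * T ^ α * (N : ℝ) ^ (-γ) := by
        rw [l1Barrier_zero hr0.ne' hα0.ne', sub_zero]
        exact l1Barrier_le hT.le hα1 hγ hn hnN

end
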